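/- arXiv:1410.4085 — 2 statements merged into one kernel-verified Lean document; each statement's English description precedes it below -/
import Mathlib

section
/- For every n ≥ 0, Stern's diatomic sequence value s(n) equals the number of occurrences of subwords (scattered subsequences) belonging to the language b(ab)^* in the binary expansion of n (digits a=0, b=1). That is, s(n) = Σ_{m ≥ 0} (number of occurrences of the subsequence 1(01)^m in the binary word of n). -/
/-- Stern's diatomic sequence. -/
def stern : ℕ → ℕ
  | 0 => 0
  | 1 => 1
  | n + 2 =>
      if (n + 2) % 2 = 0 then stern ((n + 2) / 2)
      else stern ((n + 2) / 2) + stern ((n + 2) / 2 + 1)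
decreasing_by all_goals omega

/-- Shortest palindrome having `w` as a prefix (right palindromic closure). -/
def palClosure (w : List Bool) : List Bool :=
  let d := Nat.find (p := fun d => (w.drop d).reverse = w.drop d)
    ⟨w.length, by simp⟩
  w ++ (w.take d).reverse

/-- Iterated palindromic closure (palindromization map ψ). -/
def psi (v : List Bool) : List Bool :=
  v.foldl (fun w x => palClosure (w ++ [x])) []

/-- Minimal period of a word (`1` for the empty word). -/
def minPeriod (w : List Bool) : ℕ :=
  Nat.find (p := fun p => 1 ≤ p ∧ ∀ i < w.length, i + p < w.length → w[i]? = w[i + p]?)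
    ⟨w.length + 1, by omega, fun i _ h => absurd h (by omega)⟩

/-- The morphism μ_x on a single letter. -/
def muLetter (x y : Bool) : List Bool := if y = x then [x] else [x, y]

/-- Action of μ_x on a word. -/
def muL (x : Bool) (w : List Bool) : List Bool := w.flatMap (muLetter x)

/-- μ_v = μ_{x₁} ∘ ⋯ ∘ μ_{xₙ} for v = x₁⋯xₙ. -/
def muWord (v : List Bool) (w : List Bool) : List Bool := v.foldr muL w

/-- Fibonacci numbers shifted: `fibD k = F_{k-1}` where F_{-1}=F_0=1. -/
def fibD : ℕ → ℕ
  | 0 => 1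
  | 1 => 1
  | n + 2 => fibD (n + 1) + fibD n

/-- Head-recursion helper for continuants. -/
def khead : List ℤ → ℤ
  | [] => 1
  | [a] => a
  | a :: b :: t => a * khead (b :: t) + khead t

/-- Continuant K[a₀,…,aₙ]: K[]=1, K[a₀]=a₀, K[a₀,…,aₙ]=aₙK[a₀,…,a_{n-1}]+K[a₀,…,a_{n-2}]. -/
def contK (l : List ℤ) : ℤ := khead l.reverse

/-- Value of a little-endian list of binary digits. -/
def ofBits (l : List Bool) : ℕ := l.foldr (fun b n => 2 * n + (if b then 1 else 0)) 0

/-- The integer obtained by reversing the binary expansion of `n`. -/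
def binRev (n : ℕ) : ℕ := ofBits n.bits.reverse

/-- The word b(ab)^m over {a,b} ≃ {false,true}. -/
def altPat : ℕ → List Bool
  | 0 => [true]
  | m + 1 => altPat m ++ [false, true]


/-! ### Auxiliary lemmas for the proof -/

def patB (m : ℕ) : List Bool := altPat m ++ [false]

lemma altPat_length (m : ℕ) : (altPat m).length = 2*m+1 := by
  induction m with
  | zero => rfl
  | succ m ih => simp [altPat, ih]; ring

lemma altPat_zero_eq : altPat 0 = [] ++ [true] := rfl

lemma altPat_succ_eq (m : ℕ) : altPat (m+1) = patB m ++ [true] := by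
  simp [altPat, patB]

lemma altPat_last (m : ℕ) : (altPat m).getLast? = some true := by
  cases m with
  | zero => rfl
  | succ m => rw [altPat_succ_eq, List.getLast?_concat]

lemma patB_last (m : ℕ) : (patB m).getLast? = some false := List.getLast?_concat

lemma count_sublists_zero {w p : List Bool} (h : w.length < p.length) :
    w.sublists.count p = 0 := by
  rw [List.count_eq_zero]
  intro hm
  have := (List.mem_sublists.1 hm).length_le
  omega

lemma count_map_concat_self (l : List (List Bool)) (x : Bool) (p : List Bool) :
    (l.map (· ++ [x])).count (p ++ [x]) = l.count p := by
  induction l with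
  | nil => rfl
  | cons a l ih =>
    simp only [List.map_cons, List.count_cons, ih]
    have : (a ++ [x] = p ++ [x]) ↔ (a = p) :=
      ⟨fun h => List.append_cancel_right h, fun h => by rw [h]⟩
    simp [this]

lemma count_map_concat_ne (l : List (List Bool)) (x : Bool) (p : List Bool)
    (h : p.getLast? ≠ some x) :
    (l.map (· ++ [x])).count p = 0 := by
  rw [List.count_eq_zero]
  intro hm
  obtain ⟨a, -, rfl⟩ := List.mem_map.1 hm
  exact h List.getLast?_concat

lemma count_nil_sublists (w : List Bool) : w.sublists.count [] = 1 := by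
  induction w using List.reverseRecOn with
  | nil => rfl
  | append_singleton w x ih =>
    rw [List.sublists_concat, List.count_append, ih,
      count_map_concat_ne _ _ _ (by simp)]

lemma stern_two_mul (k : ℕ) : stern (2*k) = stern k := by
  match k with
  | 0 => rfl
  | k+1 =>
    have h : 2*(k+1) = (2*k) + 2 := by ring
    rw [h, stern]
    have : (2*k+2) % 2 = 0 := by omega
    rw [if_pos this]
    congr 1
    omega

lemma stern_two_mul_add_one (k : ℕ) : stern (2*k+1) = stern k + stern (k+1) := by
  match k with
  | 0 => norm_num [stern]
  | k+1 =>
    have h : 2*(k+1)+1 = (2*k+1) + 2 := by ring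
    rw [h, stern]
    rw [if_neg (by omega)]
    have h1 : (2*k+1+2)/2 = k+1 := by omega
    rw [h1]

/-- Sum of counts of patterns `b(ab)^m`. -/
def Tc (w : List Bool) (N : ℕ) : ℕ :=
  ∑ m ∈ Finset.range N, w.sublists.count (altPat m)

/-- Sum of counts of patterns `b(ab)^m a`. -/
def Uc (w : List Bool) (N : ℕ) : ℕ :=
  ∑ m ∈ Finset.range N, w.sublists.count (patB m)

lemma Tc_concat_false (w : List Bool) (N : ℕ) : Tc (w ++ [false]) N = Tc w N := by
  unfold Tc
  refine Finset.sum_congr rfl fun m _ => ?_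
  rw [List.sublists_concat, List.count_append,
    count_map_concat_ne _ _ _ (by rw [altPat_last]; simp)]
  omega

lemma Uc_concat_true (w : List Bool) (N : ℕ) : Uc (w ++ [true]) N = Uc w N := by
  unfold Uc
  refine Finset.sum_congr rfl fun m _ => ?_
  rw [List.sublists_concat, List.count_append,
    count_map_concat_ne _ _ _ (by rw [patB_last]; simp)]
  omega

lemma Uc_concat_false (w : List Bool) (N : ℕ) :
    Uc (w ++ [false]) N = Uc w N + Tc w N := by
  unfold Uc Tc
  rw [← Finset.sum_add_distrib]
  refine Finset.sum_congr rfl fun m _ => ?_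
  rw [List.sublists_concat, List.count_append]
  congr 1
  show (w.sublists.map (· ++ [false])).count (altPat m ++ [false]) = _
  exact count_map_concat_self _ _ _

/-- helper function for the new occurrences ending at a final `true`. -/
def eAux (w : List Bool) : ℕ → ℕ
  | 0 => w.sublists.count ([] : List Bool)
  | m+1 => w.sublists.count (patB m)

lemma Tc_concat_true (w : List Bool) (N : ℕ) :
    Tc (w ++ [true]) (N+1) = Tc w (N+1) + (Uc w N + 1) := by
  unfold Tc Uc
  have key : ∀ m, (w ++ [true]).sublists.count (altPat m) =
      w.sublists.count (altPat m) + eAux w m := by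
    intro m
    rw [List.sublists_concat, List.count_append]
    congr 1
    match m with
    | 0 => rw [altPat_zero_eq]; exact count_map_concat_self _ _ _
    | m+1 => rw [altPat_succ_eq]; exact count_map_concat_self _ _ _
  simp only [key]
  rw [Finset.sum_add_distrib]
  congr 1
  rw [Finset.sum_range_succ' (eAux w) N]
  show (∑ m ∈ Finset.range N, eAux w (m+1)) + w.sublists.count [] = _
  rw [count_nil_sublists]
  congr 1

lemma Tc_Uc_eq_stern (n : ℕ) : ∀ N, n.bits.length ≤ N →
    Tc n.bits.reverse N = stern n ∧ Uc n.bits.reverse N + 1 = stern (n+1) := by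
  induction n using Nat.strong_induction_on with
  | _ n ih =>
    intro N hN
    rcases eq_or_ne n 0 with rfl | hn
    · rw [Nat.zero_bits, List.reverse_nil]
      have h0 : stern 0 = 0 := by norm_num [stern]
      have h1 : stern 1 = 1 := by norm_num [stern]
      rw [h0, h1]
      have hT0 : Tc ([] : List Bool) N = 0 := by
        refine Finset.sum_eq_zero fun m _ => ?_
        exact count_sublists_zero (by rw [altPat_length]; simp)
      have hU0 : Uc ([] : List Bool) N = 0 := by
        refine Finset.sum_eq_zero fun m _ => ?_
        exact count_sublists_zero (by simp [patB, altPat_length])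
      rw [hT0, hU0]
      exact ⟨rfl, rfl⟩
    · set k := n / 2 with hk
      have hklt : k < n := Nat.div_lt_self (Nat.pos_of_ne_zero hn) one_lt_two
      rcases Nat.even_or_odd n with he | ho
      · -- n = 2 * k, k ≠ 0
        obtain ⟨t, ht⟩ := he
        have hnk : n = 2 * k := by omega
        have hk0 : k ≠ 0 := by omega
        have hbits : n.bits = false :: k.bits := by rw [hnk]; exact Nat.bit0_bits k hk0
        have hlb : n.bits.length = k.bits.length + 1 := by rw [hbits]; rfl
        have hlen : k.bits.length ≤ N := by omega
        obtain ⟨hT, hU⟩ := ih k hklt N hlen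
        rw [hbits]
        simp only [List.reverse_cons]
        constructor
        · rw [Tc_concat_false, hT, hnk, stern_two_mul]
        · rw [Uc_concat_false, show n+1 = 2*k+1 from by omega,
            stern_two_mul_add_one]
          omega
      · -- n = 2 * k + 1
        obtain ⟨t, ht⟩ := ho
        have hnk : n = 2 * k + 1 := by omega
        have hbits : n.bits = true :: k.bits := by rw [hnk]; exact Nat.bit1_bits k
        have hlen1 : n.bits.length = k.bits.length + 1 := by rw [hbits]; rfl
        obtain ⟨N', rfl⟩ : ∃ N', N = N' + 1 := ⟨N - 1, by omega⟩
        have hlen : k.bits.length ≤ N' := by omega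
        obtain ⟨hT, hU⟩ := ih k hklt (N'+1) (by omega)
        obtain ⟨-, hU'⟩ := ih k hklt N' hlen
        rw [hbits]
        simp only [List.reverse_cons]
        constructor
        · rw [Tc_concat_true, hT, hU', hnk, stern_two_mul_add_one]
        · rw [Uc_concat_true, hU, show n+1 = 2*(k+1) from by omega,
            stern_two_mul]


theorem stern_eq_count_alternating_subwords (n : ℕ) :
    stern n =
      ∑ m ∈ Finset.range (n.bits.length + 1),
        ((n.bits.reverse).sublists.count (altPat m)) := by
  have := (Tc_Uc_eq_stern n (n.bits.length + 1) (by omega)).1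
  rw [← this]
  rfl
end

section
/- For every word u over {a,b}, |ψ(u^∼)| = |ψ(u)|, where u^∼ denotes the reversal of u and ψ the iterated palindromic closure. -/
def pcD (w : List Bool) : ℕ :=
  Nat.find (p := fun d => (w.drop d).reverse = w.drop d) ⟨w.length, by simp⟩

lemma palClosure_eq (w : List Bool) : palClosure w = w ++ (w.take (pcD w)).reverse := rfl

lemma pcD_spec (w : List Bool) : (w.drop (pcD w)).reverse = w.drop (pcD w) :=
  Nat.find_spec (p := fun d => (w.drop d).reverse = w.drop d) ⟨w.length, by simp⟩

lemma pcD_le (w : List Bool) : pcD w ≤ w.length :=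
  Nat.find_min' _ (by simp)

lemma pcD_min' (w : List Bool) {d : ℕ} (h : (w.drop d).reverse = w.drop d) : pcD w ≤ d :=
  Nat.find_min' _ h

lemma pcD_min (w : List Bool) {e : ℕ} (h : e < pcD w) : ¬ ((w.drop e).reverse = w.drop e) :=
  Nat.find_min _ h

lemma palClosure_length (w : List Bool) :
    (palClosure w).length = w.length + pcD w := by
  rw [palClosure_eq]
  simp [List.length_take, min_eq_left (pcD_le w)]

lemma palClosure_prefix (w : List Bool) : w <+: palClosure w :=
  ⟨_, (palClosure_eq w).symm⟩

lemma palClosure_reverse (w : List Bool) : (palClosure w).reverse = palClosure w := by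
  have h := pcD_spec w
  have hrev : w.reverse = w.drop (pcD w) ++ (w.take (pcD w)).reverse := by
    conv_lhs => rw [← List.take_append_drop (pcD w) w]
    rw [List.reverse_append, h]
  rw [palClosure_eq, List.reverse_append, List.reverse_reverse, hrev,
    ← List.append_assoc, List.take_append_drop]

lemma palClosure_min {w p : List Bool} (hp : p.reverse = p) (hwp : w <+: p) :
    (palClosure w).length ≤ p.length := by
  obtain ⟨t, ht⟩ := hwp
  have hwl : w.length ≤ p.length := by rw [← ht]; simp
  have htl : t.length = p.length - w.length := by
    have : w.length + t.length = p.length := by rw [← ht]; simp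
    omega
  by_cases hk : p.length ≤ 2 * w.length
  · -- k := p.length - w.length ≤ w.length
    have hsuf : w.reverse <:+ p := by
      have : w.reverse <:+ p.reverse := List.reverse_suffix.mpr ⟨t, ht⟩
      rwa [hp] at this
    obtain ⟨s, hs⟩ := hsuf
    have hsl : s.length = p.length - w.length := by
      have : s.length + w.reverse.length = p.length := by rw [← hs]; simp
      simp at this; omega
    have hwr : w.reverse = w.drop s.length ++ t := by
      have h1 : p.drop s.length = w.reverse := by
        rw [← hs, List.drop_left]
      have h2 : p.drop s.length = w.drop s.length ++ t := by
        rw [← ht, List.drop_append_of_le_length (by omega)]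
      rw [← h1, h2]
    have hw : w = t.reverse ++ (w.drop s.length).reverse := by
      have := congrArg List.reverse hwr
      simpa using this
    have hpal : (w.drop s.length).reverse = w.drop s.length := by
      have htrl : t.reverse.length = s.length := by simp; omega
      have : w.drop s.length = (w.drop s.length).reverse := by
        conv_lhs => rw [hw]
        exact List.drop_left' htrl
      exact this.symm
    have := pcD_min' w hpal
    rw [palClosure_length]; omega
  · have := pcD_le w
    rw [palClosure_length]; omega


lemma palClosure_length_of {w : List Bool} {d : ℕ} (hdle : d ≤ w.length)
    (hpal : (w.drop d).reverse = w.drop d)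
    (hmin : ∀ e < d, ¬ ((w.drop e).reverse = w.drop e)) :
    (palClosure w).length = w.length + d := by
  have h1 : pcD w = d := by
    refine le_antisymm (pcD_min' w hpal) ?_
    by_contra hlt
    push_neg at hlt
    exact hmin _ hlt (pcD_spec w)
  rw [palClosure_length, h1]

lemma psi_nil : psi [] = [] := rfl

lemma psi_snoc (u : List Bool) (x : Bool) :
    psi (u ++ [x]) = palClosure (psi u ++ [x]) := by
  simp [psi, List.foldl_append]

lemma psi_snoc_prefix (u : List Bool) (x : Bool) :
    psi u ++ [x] <+: psi (u ++ [x]) := by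
  rw [psi_snoc]; exact palClosure_prefix _

lemma psi_le_snoc (u : List Bool) (x : Bool) : psi u <+: psi (u ++ [x]) :=
  (List.prefix_append _ _).trans (psi_snoc_prefix u x)

lemma psi_mono {v u : List Bool} (h : v <+: u) : psi v <+: psi u := by
  induction u using List.reverseRecOn with
  | nil =>
    rw [List.prefix_nil.mp h]
  | append_singleton u x ih =>
    by_cases hv : v.length ≤ u.length
    · exact (ih (List.prefix_of_prefix_length_le h (List.prefix_append u [x]) hv)).trans
        (psi_le_snoc u x)
    · have hlen : v.length = (u ++ [x]).length := by
        have := h.length_le; simp at this ⊢; omega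
      rw [h.eq_of_length hlen]

lemma suffix_of_suffix_len_le {l₁ l₂ l₃ : List Bool} (h1 : l₁ <:+ l₃) (h2 : l₂ <:+ l₃)
    (h : l₁.length ≤ l₂.length) : l₁ <:+ l₂ := by
  rw [← List.reverse_prefix] at h1 h2 ⊢
  exact List.prefix_of_prefix_length_le h1 h2 (by simpa using h)

lemma psi_pal_c (u : List Bool) : (psi u).reverse = psi u ∧
    ∀ p : List Bool, p.reverse = p → p <+: psi u → ∃ v, v <+: u ∧ psi v = p := by
  induction u using List.reverseRecOn with
  | nil =>
    refine ⟨rfl, fun p _ hp => ?_⟩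
    rw [psi_nil] at hp
    exact ⟨[], List.nil_prefix, by rw [psi_nil, List.prefix_nil.mp hp]⟩
  | append_singleton u x ih =>
    obtain ⟨hpalu, hC⟩ := ih
    have hpalW : (psi (u ++ [x])).reverse = psi (u ++ [x]) := by
      rw [psi_snoc]; exact palClosure_reverse _
    refine ⟨hpalW, fun p hp hpW => ?_⟩
    by_cases hpeq : p = psi (u ++ [x])
    · exact ⟨u ++ [x], List.prefix_refl _, hpeq.symm⟩
    · have hplt : p.length < (psi (u ++ [x])).length :=
        lt_of_le_of_ne hpW.length_le (fun h => hpeq (hpW.eq_of_length h))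
      have hple : p.length ≤ (psi u).length := by
        by_contra hgt
        push_neg at hgt
        have hpsuf : p <:+ psi (u ++ [x]) := by
          have := List.reverse_suffix.mpr hpW
          rwa [hp, hpalW] at this
        have hsx : x :: psi u <:+ psi (u ++ [x]) := by
          have := List.reverse_suffix.mpr (psi_snoc_prefix u x)
          rw [List.reverse_append, hpalW] at this
          simpa [hpalu] using this
        have hsx2 : x :: psi u <:+ p :=
          suffix_of_suffix_len_le hsx hpsuf (by simp; omega)
        have hpre : psi u ++ [x] <+: p := by
          have := List.reverse_prefix.mpr hsx2
          rw [hp] at this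
          simpa [hpalu] using this
        have := palClosure_min hp hpre
        rw [← psi_snoc] at this
        omega
      have hppre : p <+: psi u :=
        List.prefix_of_prefix_length_le hpW (psi_le_snoc u x) hple
      obtain ⟨v, hv, hveq⟩ := hC p hp hppre
      exact ⟨v, hv.trans (List.prefix_append u [x]), hveq⟩

lemma key_step {u : List Bool} {x : Bool} {t : List Bool} (ht : t.reverse = t)
    (htp : t ++ [x] <+: psi u) : ∃ v, v ++ [x] <+: u ∧ psi v = t := by
  obtain ⟨hpalu, hC⟩ := psi_pal_c u
  have htpre : t <+: psi u := (List.prefix_append t [x]).trans htp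
  obtain ⟨v, hvu, hveq⟩ := hC t ht htpre
  have hvne : v ≠ u := by
    rintro rfl
    have h1 := htp.length_le
    rw [hveq] at h1
    simp at h1
  obtain ⟨r, hr⟩ := hvu
  have hrne : r ≠ [] := by
    rintro rfl
    exact hvne (by simpa using hr)
  obtain ⟨y, r', rfl⟩ := List.exists_cons_of_ne_nil hrne
  have hvy : v ++ [y] <+: u := ⟨r', by simpa using hr⟩
  have h1 : psi v ++ [y] <+: psi u := (psi_snoc_prefix v y).trans (psi_mono hvy)
  rw [hveq] at h1
  have heq : t ++ [x] = t ++ [y] :=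
    (List.prefix_of_prefix_length_le htp h1 (by simp)).eq_of_length (by simp)
  have hxy : x = y := by simpa using heq
  exact ⟨v, hxy ▸ hvy, hveq⟩

lemma min_step {u : List Bool} {x : Bool} {e : ℕ} (he : e < (psi u).length)
    (hpal : ((psi u ++ [x]).drop e).reverse = (psi u ++ [x]).drop e) :
    ∃ v, v ++ [x] <+: u ∧ (psi v).length + e + 1 = (psi u).length := by
  obtain ⟨hpalu, _⟩ := psi_pal_c u
  have hde : (psi u ++ [x]).drop e = (psi u).drop e ++ [x] :=
    List.drop_append_of_le_length (le_of_lt he)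
  have hlen : ((psi u).drop e).length = (psi u).length - e := by simp
  have hne : (psi u).drop e ≠ [] := by
    intro h
    rw [h] at hlen
    simp at hlen
    omega
  -- head of the dropped suffix is x
  have hhead : ((psi u).drop e).head? = some x := by
    have hlast : ((psi u ++ [x]).drop e).getLast? = some x := by
      rw [hde]
      simp
    have h2 : ((psi u ++ [x]).drop e).head? = some x := by
      rw [← hpal, List.head?_reverse]
      exact hlast
    rwa [hde, List.head?_append_of_ne_nil _ hne] at h2
  obtain ⟨hd, t, hts⟩ := List.exists_cons_of_ne_nil hne
  have hhd : hd = x := by rw [hts] at hhead; simpa using hhead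
  rw [hhd] at hts
  have htpal : t.reverse = t := by
    rw [hde, hts] at hpal
    have : (x :: (t ++ [x])).reverse = x :: (t ++ [x]) := by
      simpa using hpal
    rw [List.reverse_cons, List.reverse_append] at this
    simp at this
    exact this
  have hsfx : x :: t <:+ psi u := hts ▸ List.drop_suffix e (psi u)
  have hpre : t ++ [x] <+: psi u := by
    have := List.reverse_prefix.mpr hsfx
    rw [hpalu] at this
    simpa [htpal] using this
  obtain ⟨v, hv, hveq⟩ := key_step htpal hpre
  refine ⟨v, hv, ?_⟩
  have h3 : t.length + 1 = (psi u).length - e := by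
    rw [hts] at hlen; simp at hlen; omega
  rw [hveq]
  omega

lemma psi_len_rec_no {u : List Bool} {x : Bool} (h : ∀ v, ¬ (v ++ [x] <+: u)) :
    (psi (u ++ [x])).length = 2 * (psi u).length + 1 := by
  rw [psi_snoc]
  have hlen := palClosure_length_of (w := psi u ++ [x]) (d := (psi u).length)
    (by simp) (by rw [List.drop_left]; rfl)
    (fun e he hpal => (h _ (min_step he hpal).choose_spec.1).elim)
  rw [hlen]
  simp
  omega

lemma psi_len_rec_max {u v₀ : List Bool} {x : Bool} (h0 : v₀ ++ [x] <+: u)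
    (hmax : ∀ v, v ++ [x] <+: u → (psi v).length ≤ (psi v₀).length) :
    (psi (u ++ [x])).length + (psi v₀).length = 2 * (psi u).length := by
  have hpal₀ := (psi_pal_c v₀).1
  have hpalu := (psi_pal_c u).1
  have hpre : psi v₀ ++ [x] <+: psi u := (psi_snoc_prefix v₀ x).trans (psi_mono h0)
  have hk1 : (psi v₀).length + 1 ≤ (psi u).length := by
    have := hpre.length_le; simpa using this
  obtain ⟨d, hd⟩ : ∃ d, d + ((psi v₀).length + 1) = (psi u).length :=
    ⟨_, Nat.sub_add_cancel hk1⟩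
  rw [psi_snoc]
  have hdrop : (psi u ++ [x]).drop d = x :: (psi v₀ ++ [x]) := by
    have h1 : (psi u ++ [x]).drop d = (psi u).drop d ++ [x] :=
      List.drop_append_of_le_length (by omega)
    have hsfx : x :: psi v₀ <:+ psi u := by
      have := List.reverse_suffix.mpr hpre
      rw [hpalu, List.reverse_append] at this
      simpa [hpal₀] using this
    obtain ⟨s, hs⟩ := hsfx
    have hsl : s.length = d := by
      have : s.length + (x :: psi v₀).length = (psi u).length := by rw [← hs]; simp
      simp at this; omega
    have h2 : (psi u).drop d = x :: psi v₀ := by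
      rw [← hs]; exact List.drop_left' hsl
    rw [h1, h2]; rfl
  have hlen := palClosure_length_of (w := psi u ++ [x]) (d := d)
    (by simp; omega)
    (by rw [hdrop]; simp [hpal₀])
    (fun e he hpal => by
      obtain ⟨v, hv, hvl⟩ := min_step (u := u) (x := x) (e := e) (by omega) hpal
      have := hmax v hv
      omega)
  rw [hlen]
  simp
  omega

lemma prefix_snoc_cases {v u : List Bool} {x y : Bool} (h : v ++ [x] <+: u ++ [y]) :
    (v = u ∧ x = y) ∨ v ++ [x] <+: u := by
  by_cases hl : (v ++ [x]).length ≤ u.length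
  · exact Or.inr (List.prefix_of_prefix_length_le h (List.prefix_append u [y]) hl)
  · left
    have hle := h.length_le
    simp at hle hl
    have heq : v ++ [x] = u ++ [y] := h.eq_of_length (by simp; omega)
    obtain ⟨h1, h2⟩ := List.append_inj' heq rfl
    exact ⟨h1, by simpa using h2⟩

lemma prefix_snoc_ne {v u : List Bool} {x y : Bool} (hxy : y ≠ x)
    (h : v ++ [x] <+: u ++ [y]) : v ++ [x] <+: u := by
  rcases prefix_snoc_cases h with ⟨_, h2⟩ | h2
  · exact absurd h2.symm hxy
  · exact h2

lemma prefix_snoc_same {v u : List Bool} {x : Bool} (h : v ++ [x] <+: u ++ [x]) :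
    v <+: u := by
  rcases prefix_snoc_cases h with ⟨h1, _⟩ | h2
  · exact h1 ▸ List.prefix_refl v
  · exact (List.prefix_append v [x]).trans h2

lemma exists_max {u : List Bool} {x : Bool} (h : ∃ v, v ++ [x] <+: u) :
    ∃ v₀, v₀ ++ [x] <+: u ∧ ∀ v, v ++ [x] <+: u → (psi v).length ≤ (psi v₀).length := by
  induction u using List.reverseRecOn with
  | nil =>
    obtain ⟨v, hv⟩ := h
    have := hv.length_le
    simp at this
  | append_singleton u y ih =>
    by_cases hxy : y = x
    · subst hxy
      exact ⟨u, List.prefix_refl _,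
        fun v hv => (psi_mono (prefix_snoc_same hv)).length_le⟩
    · obtain ⟨v1, hv1⟩ := h
      obtain ⟨v₀, h1, h2⟩ := ih ⟨v1, prefix_snoc_ne hxy hv1⟩
      exact ⟨v₀, h1.trans (List.prefix_append u [y]),
        fun v hv => h2 v (prefix_snoc_ne hxy hv)⟩

/-- `W u x = |ψ(u ++ [x])| - |ψ u|` over ℤ. -/
def Wt (u : List Bool) (x : Bool) : ℤ :=
  ((psi (u ++ [x])).length : ℤ) - ((psi u).length : ℤ)

lemma psi_len_snoc (u : List Bool) (x : Bool) :
    ((psi (u ++ [x])).length : ℤ) = ((psi u).length : ℤ) + Wt u x := by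
  unfold Wt; ring

lemma Wt_nil (x : Bool) : Wt [] x = 1 := by
  have h := psi_len_rec_no (u := []) (x := x)
    (fun v hv => by have := hv.length_le; simp at this)
  unfold Wt
  rw [show ([] : List Bool) ++ [x] = [x] from rfl] at h ⊢
  rw [psi_nil] at h ⊢
  simp at h ⊢
  omega

lemma Wt_snoc_same (u : List Bool) (x : Bool) : Wt (u ++ [x]) x = Wt u x := by
  have h2 := psi_len_rec_max (u := u ++ [x]) (x := x) (v₀ := u) (List.prefix_refl _)
    (fun v hv => (psi_mono (prefix_snoc_same hv)).length_le)
  unfold Wt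
  omega

lemma Wt_snoc_ne (u : List Bool) {x y : Bool} (hxy : y ≠ x) :
    Wt (u ++ [y]) x = Wt u x + Wt u y := by
  by_cases h : ∃ v, v ++ [x] <+: u
  · obtain ⟨v₀, h1, h2⟩ := exists_max h
    have e1 := psi_len_rec_max h1 h2
    have e2 := psi_len_rec_max (u := u ++ [y]) (x := x) (v₀ := v₀)
      (h1.trans (List.prefix_append u [y]))
      (fun v hv => h2 v (prefix_snoc_ne hxy hv))
    unfold Wt
    omega
  · have e1 := psi_len_rec_no (u := u) (x := x) (fun v hv => h ⟨v, hv⟩)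
    have e2 := psi_len_rec_no (u := u ++ [y]) (x := x)
      (fun v hv => h ⟨v, prefix_snoc_ne hxy hv⟩)
    unfold Wt
    omega

/-- 2×2 integer matrices as 4-tuples (a b; c d). -/
def mmul (M N : ℤ × ℤ × ℤ × ℤ) : ℤ × ℤ × ℤ × ℤ :=
  (M.1 * N.1 + M.2.1 * N.2.2.1, M.1 * N.2.1 + M.2.1 * N.2.2.2,
   M.2.2.1 * N.1 + M.2.2.2 * N.2.2.1, M.2.2.1 * N.2.1 + M.2.2.2 * N.2.2.2)

def Aof (x : Bool) : ℤ × ℤ × ℤ × ℤ := if x then (1, 1, 0, 1) else (1, 0, 1, 1)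

def MP : List Bool → ℤ × ℤ × ℤ × ℤ
  | [] => (1, 0, 0, 1)
  | x :: u => mmul (MP u) (Aof x)

lemma mmul_assoc (a b c : ℤ × ℤ × ℤ × ℤ) : mmul (mmul a b) c = mmul a (mmul b c) := by
  obtain ⟨a1, a2, a3, a4⟩ := a
  obtain ⟨b1, b2, b3, b4⟩ := b
  obtain ⟨c1, c2, c3, c4⟩ := c
  simp only [mmul, Prod.mk.injEq]
  refine ⟨by ring, by ring, by ring, by ring⟩

lemma MP_snoc (u : List Bool) (x : Bool) : MP (u ++ [x]) = mmul (Aof x) (MP u) := by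
  induction u with
  | nil =>
    show mmul (MP []) (Aof x) = mmul (Aof x) (MP [])
    cases x <;> simp [MP, mmul, Aof]
  | cons y u ih =>
    show mmul (MP (u ++ [x])) (Aof y) = mmul (Aof x) (mmul (MP u) (Aof y))
    rw [ih, mmul_assoc]

/-- anti-transpose -/
def Tm (M : ℤ × ℤ × ℤ × ℤ) : ℤ × ℤ × ℤ × ℤ := (M.2.2.2, M.2.1, M.2.2.1, M.1)

lemma Tm_mmul_A (M : ℤ × ℤ × ℤ × ℤ) (x : Bool) :
    mmul (Aof x) (Tm M) = Tm (mmul M (Aof x)) := by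
  obtain ⟨a, b, c, d⟩ := M
  cases x <;>
    · simp only [mmul, Aof, Tm, if_true, if_false, Prod.mk.injEq, Bool.false_eq_true]
      refine ⟨by ring, by ring, by ring, by ring⟩

lemma MP_reverse (u : List Bool) : MP u.reverse = Tm (MP u) := by
  induction u with
  | nil => simp [MP, Tm]
  | cons x u ih =>
    rw [List.reverse_cons, MP_snoc, ih]
    exact Tm_mmul_A (MP u) x

lemma MP_inv (u : List Bool) :
    Wt u false = (MP u).1 + (MP u).2.1 ∧
    Wt u true = (MP u).2.2.1 + (MP u).2.2.2 ∧
    ((psi u).length : ℤ) = (MP u).1 + (MP u).2.1 + (MP u).2.2.1 + (MP u).2.2.2 - 2 := by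
  induction u using List.reverseRecOn with
  | nil =>
    refine ⟨?_, ?_, ?_⟩ <;> simp [MP, Wt_nil, psi_nil]
  | append_singleton u x ih =>
    obtain ⟨h1, h2, h3⟩ := ih
    have hf := psi_len_snoc u x
    rw [MP_snoc]
    cases x
    · have w1 := Wt_snoc_same u false
      have w2 := Wt_snoc_ne u (show false ≠ true by decide)
      simp only [Aof, Bool.false_eq_true, if_false, mmul]
      refine ⟨?_, ?_, ?_⟩ <;> · push_cast at *; linarith
    · have w1 := Wt_snoc_same u true
      have w2 := Wt_snoc_ne u (show true ≠ false by decide)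
      simp only [Aof, if_true, mmul]
      refine ⟨?_, ?_, ?_⟩ <;> · push_cast at *; linarith

theorem psi_length_reverse (u : List Bool) :
    (psi u.reverse).length = (psi u).length := by
  have h1 := (MP_inv u.reverse).2.2
  have h2 := (MP_inv u).2.2
  rw [MP_reverse] at h1
  simp only [Tm] at h1
  have h : ((psi u.reverse).length : ℤ) = ((psi u).length : ℤ) := by linarith
  exact_mod_cast h
end
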